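/- Suppose x, y in (0,1) with x ≠ y, and normalized confusion matrices for two groups satisfy demographic parity (TPa+FPa = TPb+FPb), equal opportunity (TPa·(1-y) = TPb·(1-x)), and predictive parity (TPa·FPb = TPb·FPa) with FPb+TPb > 0. Then TPa = 0 and TPb = 0. -/
import Mathlib

theorem stmt
    (x y TPa FNa TNa FPa TPb FNb TNb FPb : ℝ)
    (hx0 : 0 < x) (hx1 : x < 1) (hy0 : 0 < y) (hy1 : y < 1)
    (hTPa : 0 ≤ TPa) (hFNa : 0 ≤ FNa) (hTNa : 0 ≤ TNa) (hFPa : 0 ≤ FPa)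
    (hTPb : 0 ≤ TPb) (hFNb : 0 ≤ FNb) (hTNb : 0 ≤ TNb) (hFPb : 0 ≤ FPb)
    (hra : TPa + FNa = 1 - x) (hra' : TNa + FPa = x)
    (hrb : TPb + FNb = 1 - y) (hrb' : TNb + FPb = y)
    (hxy : x ≠ y)
    (hdp : TPa + FPa = TPb + FPb)
    (heo : TPa * (1 - y) = TPb * (1 - x))
    (hpp : TPa * FPb = TPb * FPa)
    (hnd : 0 < FPb + TPb)
    : TPa = 0 ∧ TPb = 0 := by
  have hTPa0 : TPa = 0 := by
    by_contra h
    have hTPa' : 0 < TPa := lt_of_le_of_ne hTPa (Ne.symm h)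
    have heq : TPa = TPb := by
      have : (TPa - TPb) * (TPb + FPb) = 0 := by nlinarith
      rcases mul_eq_zero.mp this with h1 | h1
      · linarith
      · linarith
    apply hxy
    nlinarith
  refine ⟨hTPa0, ?_⟩
  rw [hTPa0] at heo
  have : TPb * (1 - x) = 0 := by linarith
  rcases mul_eq_zero.mp this with h | h
  · exact h
  · linarith
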